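/- arXiv:2401.07667 — 2 statements merged into one kernel-verified Lean document; each statement's English description precedes it below -/
import Mathlib

section
/- Let P and P* be bounded operators on a Hilbert space with P a (not necessarily orthogonal) projection (P^2 = P) and P* its adjoint. Then the operator T = P P* + (Id − P)(Id − P*) is self-adjoint, positive, and invertible. -/
open scoped NNReal

/-- for a bounded idempotent `P` on a Hilbert space,
`T = P P* + (Id - P)(Id - P*)` is self-adjoint, positive, and invertible. -/
theorem stmt5 {H : Type*} [NormedAddCommGroup H] [InnerProductSpace ℂ H] [CompleteSpace H]
    (P : H →L[ℂ] H) (hP : P ∘L P = P) :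
    ∀ T : H →L[ℂ] H,
      T = P ∘L ContinuousLinearMap.adjoint P +
          (1 - P) ∘L (1 - ContinuousLinearMap.adjoint P) →
      IsSelfAdjoint T ∧ T.IsPositive ∧ IsUnit T := by
  intro T hT
  have hadj1 : ContinuousLinearMap.adjoint (1 - ContinuousLinearMap.adjoint P) = 1 - P := by
    rw [← ContinuousLinearMap.star_eq_adjoint, star_sub, star_one,
      ContinuousLinearMap.star_eq_adjoint, ContinuousLinearMap.adjoint_adjoint]
  have hadj2 : ContinuousLinearMap.adjoint (1 - P) = 1 - ContinuousLinearMap.adjoint P := by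
    rw [← ContinuousLinearMap.star_eq_adjoint, star_sub, star_one,
      ContinuousLinearMap.star_eq_adjoint]
  have hsa : IsSelfAdjoint T := by
    rw [hT]
    apply IsSelfAdjoint.add
    · rw [IsSelfAdjoint, ContinuousLinearMap.star_eq_adjoint,
        ContinuousLinearMap.adjoint_comp, ContinuousLinearMap.adjoint_adjoint]
    · rw [IsSelfAdjoint, ContinuousLinearMap.star_eq_adjoint,
        ContinuousLinearMap.adjoint_comp, hadj1, hadj2]
  have hinner : ∀ x : H, inner ℂ (T x) x =
      ((‖ContinuousLinearMap.adjoint P x‖ ^ 2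
        + ‖(1 - ContinuousLinearMap.adjoint P) x‖ ^ 2 : ℝ) : ℂ) := by
    intro x
    have h1 : (inner ℂ ((P ∘L ContinuousLinearMap.adjoint P) x) x : ℂ) =
        inner ℂ (ContinuousLinearMap.adjoint P x) (ContinuousLinearMap.adjoint P x) := by
      rw [ContinuousLinearMap.comp_apply, ← ContinuousLinearMap.adjoint_adjoint P,
        ContinuousLinearMap.adjoint_inner_left, ContinuousLinearMap.adjoint_adjoint]
    have h2 : (inner ℂ (((1 - P) ∘L (1 - ContinuousLinearMap.adjoint P)) x) x : ℂ) =
        inner ℂ ((1 - ContinuousLinearMap.adjoint P) x)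
          ((1 - ContinuousLinearMap.adjoint P) x) := by
      rw [ContinuousLinearMap.comp_apply, ← hadj1, ContinuousLinearMap.adjoint_inner_left]
    rw [hT]
    rw [ContinuousLinearMap.add_apply, inner_add_left, h1, h2,
      inner_self_eq_norm_sq_to_K, inner_self_eq_norm_sq_to_K]
    simp [ContinuousLinearMap.coe_sub']
  refine ⟨hsa, ⟨ContinuousLinearMap.isSelfAdjoint_iff_isSymmetric.mp hsa, ?_⟩, ?_⟩
  · intro x
    rw [ContinuousLinearMap.reApplyInnerSelf, hinner x]
    simp only [RCLike.re_to_complex, Complex.ofReal_re]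
    positivity
  · apply ContinuousLinearMap.isUnit_of_forall_le_norm_inner_map T (c := (1/2 : ℝ≥0))
      (by norm_num)
    intro x
    rw [hinner x]
    set a := ‖ContinuousLinearMap.adjoint P x‖ with ha
    set b := ‖(1 - ContinuousLinearMap.adjoint P) x‖ with hb
    have hx : ‖x‖ ≤ a + b := by
      have hxx : x = ContinuousLinearMap.adjoint P x
          + (1 - ContinuousLinearMap.adjoint P) x := by simp
      calc ‖x‖ = ‖ContinuousLinearMap.adjoint P x
          + (1 - ContinuousLinearMap.adjoint P) x‖ := by rw [← hxx]
        _ ≤ a + b := norm_add_le _ _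
    have hnorm : ‖((a ^ 2 + b ^ 2 : ℝ) : ℂ)‖ = a ^ 2 + b ^ 2 := by
      rw [Complex.norm_real, Real.norm_of_nonneg (by positivity)]
    rw [hnorm]
    have h2 : ‖x‖ ^ 2 ≤ 2 * (a ^ 2 + b ^ 2) := by
      nlinarith [norm_nonneg x, norm_nonneg (ContinuousLinearMap.adjoint P x),
        norm_nonneg ((1 - ContinuousLinearMap.adjoint P) x), sq_nonneg (a - b)]
    push_cast
    linarith
end

section
/- Let B be a unital Banach algebra, ε ∈ (0,1), and let u(r) = a(r) + r^ε b(r) with a continuous on [0,1), b bounded, and a(0) invertible in B. Then there exists δ > 0 such that u(r) is invertible for all r ∈ [0, δ), and u(r)^{-1} = ã(r) + r^ε b̃(r) with ã continuous and ã(0) = a(0)^{-1}, b̃ bounded on [0,δ). -/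
/-- in a unital Banach algebra, if `u(r) = a(r) + r^ε b(r)` with `a`
continuous, `b` bounded and `a(0)` invertible, then `u(r)` is invertible for small `r` and
its inverse again has the form `ã(r) + r^ε b̃(r)` with `ã` continuous, `ã(0) = a(0)⁻¹`, and
`b̃` bounded. -/
theorem stmt11 {B : Type*} [NormedRing B] [NormedAlgebra ℝ B] [CompleteSpace B]
    (ε : ℝ) (hε : ε ∈ Set.Ioo (0 : ℝ) 1) (a b u : ℝ → B)
    (ha : ContinuousOn a (Set.Ico 0 1))
    (hb : ∃ M, ∀ r ∈ Set.Ico (0 : ℝ) 1, ‖b r‖ ≤ M)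
    (hu : ∀ r ∈ Set.Ico (0 : ℝ) 1, u r = a r + r ^ ε • b r)
    (ha0 : IsUnit (a 0)) :
    ∃ δ : ℝ, 0 < δ ∧ δ ≤ 1 ∧ ∃ ta tb : ℝ → B,
      ContinuousOn ta (Set.Ico 0 δ) ∧ ta 0 = Ring.inverse (a 0) ∧
      (∃ M, ∀ r ∈ Set.Ico (0 : ℝ) δ, ‖tb r‖ ≤ M) ∧
      ∀ r ∈ Set.Ico (0 : ℝ) δ, IsUnit (u r) ∧
        u r * (ta r + r ^ ε • tb r) = 1 ∧ (ta r + r ^ ε • tb r) * u r = 1 := by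
  obtain ⟨hε0, hε1⟩ := hε
  obtain ⟨M, hM⟩ := hb
  set M' : ℝ := max M 0 with hM'def
  have hM'0 : 0 ≤ M' := le_max_right _ _
  have hM' : ∀ r ∈ Set.Ico (0 : ℝ) 1, ‖b r‖ ≤ M' :=
    fun r hr => (hM r hr).trans (le_max_left _ _)
  set C : ℝ := ‖Ring.inverse (a 0)‖ + 1 with hCdef
  have hC0 : 0 ≤ C := by positivity
  -- a neighborhood of `a 0` consisting of units with controlled inverse norm
  have hV : ∀ᶠ x in nhds (a 0), IsUnit x ∧ ‖Ring.inverse x‖ < C := by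
    have h1 : ∀ᶠ x in nhds (a 0), IsUnit x := Units.isOpen.eventually_mem ha0
    have h2 : ContinuousAt Ring.inverse (a 0) := by
      simpa using NormedRing.inverse_continuousAt ha0.unit
    have h3 : ∀ᶠ x in nhds (a 0), ‖Ring.inverse x‖ < C :=
      (h2.norm).eventually_lt_const (by simp [hCdef])
    exact h1.and h3
  obtain ⟨η, hη0, hη⟩ := Metric.eventually_nhds_iff.mp hV
  -- continuity of a at 0
  have hcont : ∀ᶠ r in nhds (0 : ℝ), r ∈ Set.Ico (0:ℝ) 1 → dist (a r) (a 0) < η / 2 := by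
    have := (ha 0 ⟨le_refl 0, one_pos⟩).tendsto.eventually
      (Metric.ball_mem_nhds (a 0) (half_pos hη0))
    exact eventually_nhdsWithin_iff.mp (this.mono fun r hr => hr)
  obtain ⟨c₁, hc₁0, hc₁⟩ := Metric.eventually_nhds_iff.mp hcont
  -- smallness of r ^ ε * M'
  have hrεM : ∀ᶠ r in nhds (0 : ℝ), r ^ ε * M' < η / 2 := by
    have hten : Filter.Tendsto (fun r : ℝ => r ^ ε * M') (nhds 0) (nhds ((0:ℝ) ^ ε * M')) :=
      ((Real.continuousAt_rpow_const 0 ε (Or.inr hε0.le)).mul continuousAt_const)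
    refine hten.eventually_lt_const ?_
    rw [Real.zero_rpow hε0.ne']
    simpa using half_pos hη0
  obtain ⟨c₂, hc₂0, hc₂⟩ := Metric.eventually_nhds_iff.mp hrεM
  set δ : ℝ := min 1 (min c₁ c₂) with hδdef
  have hδ0 : 0 < δ := lt_min one_pos (lt_min hc₁0 hc₂0)
  have hδ1 : δ ≤ 1 := min_le_left _ _
  -- basic facts for r in [0, δ)
  have hsub : Set.Ico (0:ℝ) δ ⊆ Set.Ico 0 1 :=
    Set.Ico_subset_Ico le_rfl hδ1
  have key : ∀ r ∈ Set.Ico (0:ℝ) δ,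
      (IsUnit (a r) ∧ ‖Ring.inverse (a r)‖ < C) ∧
      (IsUnit (u r) ∧ ‖Ring.inverse (u r)‖ < C) := by
    intro r hr
    have hr01 : r ∈ Set.Ico (0:ℝ) 1 := hsub hr
    have hdistr : dist r 0 < c₁ := by
      rw [Real.dist_eq, sub_zero, abs_of_nonneg hr.1]
      exact hr.2.trans_le ((min_le_right _ _).trans (min_le_left _ _))
    have hdistr2 : dist r 0 < c₂ := by
      rw [Real.dist_eq, sub_zero, abs_of_nonneg hr.1]
      exact hr.2.trans_le ((min_le_right _ _).trans (min_le_right _ _))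
    have haη : dist (a r) (a 0) < η / 2 := hc₁ hdistr hr01
    have hrε : r ^ ε * M' < η / 2 := hc₂ hdistr2
    have hrε0 : 0 ≤ r ^ ε := Real.rpow_nonneg hr.1 ε
    constructor
    · exact hη (haη.trans (half_lt_self hη0))
    · refine hη ?_
      have : dist (u r) (a 0) ≤ dist (a r) (a 0) + r ^ ε * ‖b r‖ := by
        rw [hu r hr01, dist_eq_norm, dist_eq_norm]
        calc ‖a r + r ^ ε • b r - a 0‖ = ‖(a r - a 0) + r ^ ε • b r‖ := by
              congr 1; abel
          _ ≤ ‖a r - a 0‖ + ‖r ^ ε • b r‖ := norm_add_le _ _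
          _ = ‖a r - a 0‖ + r ^ ε * ‖b r‖ := by
              rw [norm_smul, Real.norm_eq_abs, abs_of_nonneg hrε0]
      refine this.trans_lt ?_
      have : r ^ ε * ‖b r‖ ≤ r ^ ε * M' := mul_le_mul_of_nonneg_left (hM' r hr01) hrε0
      linarith
  -- the data
  refine ⟨δ, hδ0, hδ1, fun r => Ring.inverse (a r),
    fun r => (r ^ ε)⁻¹ • (Ring.inverse (u r) - Ring.inverse (a r)), ?_, rfl, ?_, ?_⟩
  · -- continuity of ta
    intro r hr
    have h1 : ContinuousAt Ring.inverse (a r) := by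
      have := NormedRing.inverse_continuousAt ((key r hr).1.1).unit
      rwa [IsUnit.unit_spec] at this
    exact h1.comp_continuousWithinAt ((ha r (hsub hr)).mono hsub)
  · -- boundedness of tb
    refine ⟨C * M' * C, ?_⟩
    intro r hr
    have hr01 : r ∈ Set.Ico (0:ℝ) 1 := hsub hr
    obtain ⟨⟨hau, han⟩, ⟨huu, hun⟩⟩ := key r hr
    rcases eq_or_lt_of_le hr.1 with h0 | hrpos
    · have : r = 0 := h0.symm
      subst this
      simp only [Real.zero_rpow hε0.ne', inv_zero, zero_smul, norm_zero]
      positivity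
    · have hrε0 : 0 < r ^ ε := Real.rpow_pos_of_pos hrpos ε
      have hdiff : Ring.inverse (u r) - Ring.inverse (a r)
          = Ring.inverse (u r) * (a r - u r) * Ring.inverse (a r) := by
        rw [mul_sub, sub_mul, mul_assoc (Ring.inverse (u r)) (a r),
          Ring.mul_inverse_cancel _ hau, mul_one, Ring.inverse_mul_cancel _ huu, one_mul]
      have hsubau : a r - u r = -(r ^ ε • b r) := by
        rw [hu r hr01]; abel
      have hnorm : ‖Ring.inverse (u r) - Ring.inverse (a r)‖ ≤ C * (r ^ ε * M') * C := by
        rw [hdiff]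
        calc ‖Ring.inverse (u r) * (a r - u r) * Ring.inverse (a r)‖
            ≤ ‖Ring.inverse (u r) * (a r - u r)‖ * ‖Ring.inverse (a r)‖ := norm_mul_le _ _
          _ ≤ ‖Ring.inverse (u r)‖ * ‖a r - u r‖ * ‖Ring.inverse (a r)‖ :=
              mul_le_mul_of_nonneg_right (norm_mul_le _ _) (norm_nonneg _)
          _ ≤ C * (r ^ ε * M') * C := by
              have h1 : ‖a r - u r‖ ≤ r ^ ε * M' := by
                rw [hsubau, norm_neg, norm_smul, Real.norm_eq_abs, abs_of_nonneg hrε0.le]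
                exact mul_le_mul_of_nonneg_left (hM' r hr01) hrε0.le
              have hbn : 0 ≤ ‖a r - u r‖ := norm_nonneg _
              have h2 : 0 ≤ r ^ ε * M' := by positivity
              have h3 : ‖Ring.inverse (u r)‖ * ‖a r - u r‖ ≤ C * (r ^ ε * M') :=
                mul_le_mul hun.le h1 hbn hC0
              exact mul_le_mul h3 han.le (norm_nonneg _) (by positivity)
      rw [norm_smul, Real.norm_eq_abs, abs_of_nonneg (inv_nonneg.mpr hrε0.le)]
      calc (r ^ ε)⁻¹ * ‖Ring.inverse (u r) - Ring.inverse (a r)‖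
          ≤ (r ^ ε)⁻¹ * (C * (r ^ ε * M') * C) :=
            mul_le_mul_of_nonneg_left hnorm (inv_nonneg.mpr hrε0.le)
        _ = C * M' * C := by field_simp
  · -- the inversion identities
    intro r hr
    have hr01 : r ∈ Set.Ico (0:ℝ) 1 := hsub hr
    obtain ⟨⟨hau, _⟩, ⟨huu, _⟩⟩ := key r hr
    have hform : Ring.inverse (a r)
        + r ^ ε • ((r ^ ε)⁻¹ • (Ring.inverse (u r) - Ring.inverse (a r)))
        = Ring.inverse (u r) := by
      rcases eq_or_lt_of_le hr.1 with h0 | hrpos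
      · have : r = 0 := h0.symm
        subst this
        have hu0 : u 0 = a 0 := by
          rw [hu 0 hr01, Real.zero_rpow hε0.ne', zero_smul, add_zero]
        rw [Real.zero_rpow hε0.ne', zero_smul, add_zero, hu0]
      · have hrε0 : (r : ℝ) ^ ε ≠ 0 := (Real.rpow_pos_of_pos hrpos ε).ne'
        rw [smul_smul, mul_inv_cancel₀ hrε0, one_smul]
        abel
    rw [hform]
    exact ⟨huu, Ring.mul_inverse_cancel _ huu, Ring.inverse_mul_cancel _ huu⟩
end
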